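/- Let T be a finite tree (a connected acyclic simple graph) with n ≥ 2 vertices in which every vertex has degree at most 3. Then there exists an edge {u, v} of T such that deleting this edge leaves two connected components each containing at least (n − 1)/3 vertices; precisely, there exist adjacent vertices u and v such that the connected component of u and the connected component of v in T with the edge {u,v} removed each have at least (n − 1)/3 vertices (equivalently, 3 times each component's size is at least n − 1). -/

import Mathlib

/-!
Orient every edge `uv` and let `cutSide u v` be the component of `u` once `uv` is removed.
Pick an edge maximising the smaller of its two sides, oriented so that `s = |cutSide u v|` is that
smaller side. For every other neighbour `x` of `v`, the side `cutSide v x` strictly contains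
`cutSide u v`, so it is larger than `s`; by maximality `cutSide x v` has at most `s` vertices.
The big side `cutSide v u` is `v` together with these at most `Δ - 1` sides, so
`n = s + |cutSide v u| ≤ 1 + Δ s`; with `Δ = 3` this is `n - 1 ≤ 3 s`.
-/

namespace SimpleGraph

variable {V : Type*} {G : SimpleGraph V} {u v w x : V}

def cutSide (G : SimpleGraph V) (u v : V) : Set V :=
  {w | (G.deleteEdges {s(u, v)}).Reachable u w}

lemma mem_cutSide_iff : w ∈ G.cutSide u v ↔ ∃ p : G.Walk u w, s(u, v) ∉ p.edges :=
  reachable_deleteEdges_iff_exists_walk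

lemma self_mem_cutSide : u ∈ G.cutSide u v := Reachable.refl u

lemma setOf_reachable_deleteEdges_eq_cutSide :
    {w | (G.deleteEdges {s(u, v)}).Reachable v w} = G.cutSide v u := by
  rw [cutSide, Sym2.eq_swap]

lemma Walk.reachable_deleteEdges_or (p : G.Walk w u) :
    (G.deleteEdges {s(u, v)}).Reachable w u ∨ (G.deleteEdges {s(u, v)}).Reachable w v := by
  induction p with
  | nil => exact Or.inl .rfl
  | @cons w x u hwx _ ih =>
    by_cases he : s(w, x) = s(u, v)
    · rcases Sym2.eq_iff.mp he with ⟨rfl, -⟩ | ⟨rfl, -⟩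
      exacts [Or.inl .rfl, Or.inr .rfl]
    · have hadj : (G.deleteEdges {s(u, v)}).Adj w x := by simp [hwx, he]
      exact ih.imp (hadj.reachable.trans ·) (hadj.reachable.trans ·)

lemma IsAcyclic.notMem_cutSide (hG : G.IsAcyclic) (huv : G.Adj u v) : v ∉ G.cutSide u v :=
  isBridge_iff.mp (isAcyclic_iff_forall_adj_isBridge.mp hG huv)

lemma IsTree.cutSide_swap_eq_compl (hT : G.IsTree) (huv : G.Adj u v) :
    G.cutSide v u = (G.cutSide u v)ᶜ := by
  ext w
  rw [← setOf_reachable_deleteEdges_eq_cutSide]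
  constructor
  · exact fun hvw huw => hT.isAcyclic.notMem_cutSide huv (huw.trans hvw.symm)
  · intro hw
    obtain ⟨p⟩ := hT.connected w u
    exact (p.reachable_deleteEdges_or.resolve_left fun h => hw h.symm).symm

lemma IsTree.ncard_cutSide_add_ncard_cutSide [Finite V] (hT : G.IsTree) (huv : G.Adj u v) :
    (G.cutSide u v).ncard + (G.cutSide v u).ncard = Nat.card V := by
  rw [hT.cutSide_swap_eq_compl huv, Set.ncard_add_ncard_compl]

/-- A walk from `u` avoiding the bridge `uv` never visits `v`, so prefixing it with the edge `vu`
gives a walk from `v` avoiding `vx`. -/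
lemma IsAcyclic.cutSide_ssubset_cutSide (hG : G.IsAcyclic) (huv : G.Adj u v) (hxu : x ≠ u) :
    G.cutSide u v ⊂ G.cutSide v x := by
  classical
  refine Set.ssubset_iff_of_subset (fun w hw => ?_) |>.mpr
    ⟨v, self_mem_cutSide, hG.notMem_cutSide huv⟩
  obtain ⟨p, hp⟩ := mem_cutSide_iff.mp hw
  have hv : v ∉ p.support := fun hv =>
    hG.notMem_cutSide huv <| mem_cutSide_iff.mpr
      ⟨p.takeUntil v hv, fun h => hp (p.edges_takeUntil_subset_edges hv h)⟩
  refine mem_cutSide_iff.mpr ⟨.cons huv.symm p, ?_⟩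
  rw [Walk.edges_cons, List.mem_cons, not_or]
  exact ⟨by simp [hxu, huv.ne'], fun h => hv (p.fst_mem_support_of_mem_edges h)⟩

lemma exists_adj_mem_cutSide (hw : w ∈ G.cutSide v u) (hwv : w ≠ v) :
    ∃ x, G.Adj v x ∧ x ≠ u ∧ w ∈ G.cutSide x v := by
  classical
  obtain ⟨p, hp⟩ := mem_cutSide_iff.mp hw
  cases hpath : p.bypass with
  | nil => exact absurd rfl hwv
  | @cons _ x _ hvx q =>
    have hsub := p.edges_bypass_subset_edges
    have hq := p.bypass_isPath
    rw [hpath, Walk.cons_isPath_iff] at hq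
    rw [hpath, Walk.edges_cons] at hsub
    refine ⟨x, hvx, fun hxu => hp (hxu ▸ hsub List.mem_cons_self),
      mem_cutSide_iff.mpr ⟨q, ?_⟩⟩
    exact fun h => hq.2 (q.snd_mem_support_of_mem_edges h)

variable (G u v) in
lemma ncard_cutSide_le_sum_add_one [Fintype V] [DecidableEq V] [DecidableRel G.Adj] :
    (G.cutSide v u).ncard ≤
      ∑ x ∈ (G.neighborFinset v).erase u, (G.cutSide x v).ncard + 1 := by
  have hcover :
      G.cutSide v u ⊆ insert v (⋃ x ∈ (G.neighborFinset v).erase u, G.cutSide x v) := by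
    intro w hw
    rcases eq_or_ne w v with rfl | hwv
    · exact Set.mem_insert _ _
    obtain ⟨x, hvx, hxu, hwx⟩ := exists_adj_mem_cutSide hw hwv
    exact Set.mem_insert_of_mem _ <| Set.mem_biUnion (by simp [hxu, hvx]) hwx
  calc (G.cutSide v u).ncard
      ≤ (⋃ x ∈ (G.neighborFinset v).erase u, G.cutSide x v).ncard + 1 :=
        (Set.ncard_le_ncard hcover).trans (Set.ncard_insert_le _ _)
    _ ≤ ∑ x ∈ (G.neighborFinset v).erase u, (G.cutSide x v).ncard + 1 := by
        gcongr
        exact Finset.set_ncard_biUnion_le _ _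

def IsMostBalancedCut (G : SimpleGraph V) (u v : V) : Prop :=
  G.Adj u v ∧ (G.cutSide u v).ncard ≤ (G.cutSide v u).ncard ∧
    ∀ a b, G.Adj a b → min (G.cutSide a b).ncard (G.cutSide b a).ncard ≤ (G.cutSide u v).ncard

lemma exists_isMostBalancedCut [Finite V] (h : ∃ a b, G.Adj a b) :
    ∃ u v, G.IsMostBalancedCut u v := by
  obtain ⟨a, b, hab⟩ := h
  obtain ⟨⟨u, v⟩, huv, hmax⟩ := Set.exists_max_image {p : V × V | G.Adj p.1 p.2}
    (fun p => min (G.cutSide p.1 p.2).ncard (G.cutSide p.2 p.1).ncard) (Set.toFinite _)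
    ⟨(a, b), hab⟩
  rcases le_total (G.cutSide u v).ncard (G.cutSide v u).ncard with h | h
  · exact ⟨u, v, huv, h, fun a b hab => min_eq_left h ▸ hmax (a, b) hab⟩
  · exact ⟨v, u, huv.symm, h, fun a b hab => min_eq_right h ▸ hmax (a, b) hab⟩

lemma IsTree.card_sub_one_le_mul_ncard_cutSide [Fintype V] [DecidableRel G.Adj] {d : ℕ}
    (hT : G.IsTree) (hdeg : G.degree v ≤ d) (hcut : G.IsMostBalancedCut u v) :
    Fintype.card V - 1 ≤ d * (G.cutSide u v).ncard := by
  classical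
  obtain ⟨huv, -, hmax⟩ := hcut
  set s := (G.cutSide u v).ncard
  have hsmall : ∀ x ∈ (G.neighborFinset v).erase u, (G.cutSide x v).ncard ≤ s := by
    intro x hx
    rw [Finset.mem_erase, mem_neighborFinset] at hx
    have hbig : s < (G.cutSide v x).ncard :=
      Set.ncard_lt_ncard (hT.isAcyclic.cutSide_ssubset_cutSide huv hx.1)
    have := hmax x v hx.2.symm
    omega
  have hdeg' : ((G.neighborFinset v).erase u).card + 1 ≤ d := by
    rwa [Finset.card_erase_add_one ((mem_neighborFinset _ _ _).mpr huv.symm),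
      card_neighborFinset_eq_degree]
  have hsum := hT.ncard_cutSide_add_ncard_cutSide huv
  rw [Nat.card_eq_fintype_card] at hsum
  calc Fintype.card V - 1
      ≤ s + ∑ x ∈ (G.neighborFinset v).erase u, (G.cutSide x v).ncard := by
        have := G.ncard_cutSide_le_sum_add_one u v; omega
    _ ≤ s + ((G.neighborFinset v).erase u).card * s := by
        gcongr; simpa using Finset.sum_le_card_nsmul _ _ _ hsmall
    _ = (((G.neighborFinset v).erase u).card + 1) * s := by ring
    _ ≤ d * s := by gcongr

end SimpleGraph

open SimpleGraph in
theorem tree_balanced_edge_cut_general {V : Type*} [Fintype V]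
    (G : SimpleGraph V) [DecidableRel G.Adj]
    (hT : G.IsTree) (hn : 2 ≤ Fintype.card V)
    (hdeg : ∀ v : V, G.degree v ≤ 3) :
    ∃ u v : V, G.Adj u v ∧
      Fintype.card V - 1 ≤
        3 * {w : V | (G.deleteEdges {s(u, v)}).Reachable u w}.ncard ∧
      Fintype.card V - 1 ≤
        3 * {w : V | (G.deleteEdges {s(u, v)}).Reachable v w}.ncard := by
  have : Nontrivial V := Fintype.one_lt_card_iff_nontrivial.mp hn
  obtain ⟨u, v, hcut⟩ := exists_isMostBalancedCut
    ⟨Classical.arbitrary V, hT.connected.preconnected.exists_adj_of_nontrivial _⟩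
  have hsmall := hT.card_sub_one_le_mul_ncard_cutSide (hdeg v) hcut
  refine ⟨u, v, hcut.1, hsmall, ?_⟩
  rw [setOf_reachable_deleteEdges_eq_cutSide]
  exact hsmall.trans (Nat.mul_le_mul_left 3 hcut.2.1)

/-- In a finite tree with `n ≥ 2` vertices and maximum degree at most 3, there is an
edge whose removal leaves two components (the one containing each endpoint) each of
size at least `(n - 1) / 3`, i.e. 3 times each component's size is at least `n - 1`. -/
theorem tree_balanced_edge_cut {V : Type*} [Fintype V] [DecidableEq V]
    (G : SimpleGraph V) [DecidableRel G.Adj]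
    (hT : G.IsTree) (hn : 2 ≤ Fintype.card V)
    (hdeg : ∀ v : V, G.degree v ≤ 3) :
    ∃ u v : V, G.Adj u v ∧
      Fintype.card V - 1 ≤
        3 * {w : V | (G.deleteEdges {s(u, v)}).Reachable u w}.ncard ∧
      Fintype.card V - 1 ≤
        3 * {w : V | (G.deleteEdges {s(u, v)}).Reachable v w}.ncard :=
  tree_balanced_edge_cut_general G hT hn hdeg
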